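/- Let $q \geq 5$ be an odd prime power and let $G$ be a group whose non-commuting graph is isomorphic (as a graph) to the non-commuting graph of the special linear group $\mathrm{SL}(2,q)$. Then $G$ is not solvable. -/

import Mathlib

/-! A graph isomorphism `Γ(G) ≅ Γ(SL(2, q))` matches commuting pairs of non-central elements, so
it preserves `|G| - |Z(G)|`, the numbers `|C(x)| - |Z(G)|` and the AC property. In `SL(2, q)` the
centralizer of a non-central `x` consists of the `α • 1 + β • x` of determinant one: it is
commutative of order at most `2q`, namely `2q` for a unipotent and `q - 1` for a split semisimple
`x`. As `|Z(G)|` divides the orders of centralizers, which divide `|G|`, this forces `|Z(G)| = 2`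
and `|G| = q³ - q`.

If `G` were solvable, the derived series gives a normal `N ≰ Z(G)` with `⁅N, N⁆ ≤ Z(G)`. The
conjugacy class of `x ∈ N` lies in `N`, so `|G| ≤ |N| |C(x)|`. If some commutative normal
subgroup `M` is not central, any `x ∈ M \ Z(G)` has `M ≤ C(x)`, so `|G| ≤ |C(x)|² ≤ 4q²`.
Otherwise `N` is not commutative, and for non-commuting `x, y ∈ N` the AC property forces every
element of `N` commuting with `x` and `y` to be central; as `n ↦ (⁅n, x⁆, ⁅n, y⁆)` is a
homomorphism `N → Z(G)²`, this gives `|N| ≤ 8` and `|G| ≤ 16q`. Both bounds contradict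
`|G| = q³ - q` for `q ≥ 5`. -/

/-- The non-commuting graph of a group `G`: vertices are the non-central
elements of `G`, and two vertices are adjacent iff they do not commute. -/
def noncommutingGraph (G : Type*) [Group G] :
    SimpleGraph {x : G // x ∉ Subgroup.center G} where
  Adj a b := ¬ Commute (a : G) (b : G)
  symm := ⟨fun _ _ h hc => h hc.symm⟩
  loopless := ⟨fun a h => h (Commute.refl (a : G))⟩

open Subgroup Matrix
open scoped commutatorElement MatrixGroups

/-- `G` is an AC-group: centralizers of non-central elements are commutative. -/
def IsACGroup (G : Type*) [Group G] : Prop :=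
  ∀ ⦃x y z : G⦄, x ∉ center G → Commute x y → Commute x z → Commute y z

section GroupTheory

variable {G : Type*} [Group G]

theorem Subgroup.index_centralizer_le_card {x : G} {H : Subgroup G} [Finite H]
    (hH : ∀ g : G, ⁅g, x⁆ ∈ H) : (centralizer {x}).index ≤ Nat.card H := by
  have hmem (c : G ⧸ centralizer {x}) : (quotientCentralizerEmbedding x c : G) ∈ H :=
    QuotientGroup.induction_on c fun g ↦ by
      rw [quotientCentralizerEmbedding_apply]
      exact hH g
  refine Nat.card_le_card_of_injective (fun c ↦ ⟨_, hmem c⟩) fun c d hcd ↦ ?_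
  exact (quotientCentralizerEmbedding x).injective (Subtype.ext (congrArg Subtype.val hcd :))

theorem card_le_card_mul_card_centralizer [Finite G] {N : Subgroup G} [hN : N.Normal] {x : G}
    (hx : x ∈ N) : Nat.card G ≤ Nat.card N * Nat.card (centralizer {x}) := by
  rw [← (centralizer {x}).card_mul_index, mul_comm]
  refine Nat.mul_le_mul_right _ (index_centralizer_le_card fun g ↦ ?_)
  rw [commutatorElement_def]
  exact N.mul_mem (hN.conj_mem x hx g) (N.inv_mem hx)

def commutatorHom (N : Subgroup G) (x : G) (hN : ∀ n ∈ N, ⁅n, x⁆ ∈ center G) :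
    N →* center G where
  toFun n := ⟨⁅(n : G), x⁆, hN n n.2⟩
  map_one' := by ext; simp
  map_mul' a b := by
    ext
    have hb := mem_center_iff.mp (hN b b.2)
    simp only [commutatorElement_def, coe_mul] at hb ⊢
    calc (a : G) * b * x * ((a : G) * b)⁻¹ * x⁻¹
        = a * (b * x * (b : G)⁻¹ * x⁻¹) * (x * (a : G)⁻¹ * x⁻¹) := by group
      _ = a * x * (a : G)⁻¹ * x⁻¹ * (b * x * (b : G)⁻¹ * x⁻¹) := by rw [hb, hb]; group

theorem commutatorHom_eq_one_iff {N : Subgroup G} {x : G} (hN : ∀ n ∈ N, ⁅n, x⁆ ∈ center G)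
    (n : N) : commutatorHom N x hN n = 1 ↔ Commute (n : G) x := by
  simp [commutatorHom, Subtype.ext_iff, commutatorElement_eq_one_iff_commute]

theorem exists_normal_not_le_commutator_le [Group.IsSolvable G] {H : Subgroup G} (hH : H ≠ ⊤) :
    ∃ N : Subgroup G, N.Normal ∧ ¬ N ≤ H ∧ ⁅N, N⁆ ≤ H := by
  classical
  have hex : ∃ n, derivedSeries G n ≤ H := by
    obtain ⟨n, hn⟩ := Group.IsSolvable.solvable (G := G)
    exact ⟨n, hn ▸ bot_le⟩
  obtain ⟨k, hk⟩ : ∃ k, Nat.find hex = k + 1 := by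
    refine Nat.exists_eq_add_one.mpr (Nat.pos_of_ne_zero fun h ↦ hH ?_)
    simpa [h] using Nat.find_spec hex
  refine ⟨derivedSeries G k, derivedSeries_normal G k, Nat.find_min hex (by omega), ?_⟩
  rw [← derivedSeries_succ, ← hk]
  exact Nat.find_spec hex

theorem commute_inv_mul_of_commutatorElement_eq {m x y : G} (h : ⁅m, x⁆ = ⁅y, x⁆) :
    Commute (y⁻¹ * m) x := by
  rw [commutatorElement_def, commutatorElement_def, mul_left_inj] at h
  calc y⁻¹ * m * x = y⁻¹ * (m * x * m⁻¹) * m := by group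
    _ = x * (y⁻¹ * m) := by rw [h]; group

namespace IsACGroup

theorem mem_centralizer_of_commute (hAC : IsACGroup G) (hZ : Nat.card (center G) = 2)
    {N : Subgroup G} (hN : ⁅N, N⁆ ≤ center G) {x y : G} (hx : x ∈ N) (hy : y ∈ N)
    (hxy : ¬ Commute y x) {d : G} (hxd : Commute x d) (hyd : Commute y d) :
    d ∈ centralizer N := by
  have hxZ : x ∉ center G := fun h ↦ hxy (mem_center_iff.mp h y)
  have hne_one {m : G} (hm : m ∈ N) (hmx : ¬ Commute m x) :
      (⟨⁅m, x⁆, hN (commutator_mem_commutator hm hx)⟩ : center G) ≠ 1 := fun h ↦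
    hmx (commutatorElement_eq_one_iff_commute.mp (congrArg Subtype.val h))
  obtain ⟨_, -, hunique⟩ := (Nat.card_eq_two_iff' (1 : center G)).mp hZ
  refine mem_centralizer_iff.mpr fun m hm ↦ ?_
  by_cases hmx : Commute m x
  · exact (hAC hxZ hmx.symm hxd).eq
  -- `Z(G) = {1, ⁅y, x⁆}`, so `y⁻¹ m` commutes with `x`
  have hm : ⁅m, x⁆ = ⁅y, x⁆ :=
    congrArg Subtype.val ((hunique _ (hne_one hm hmx)).trans (hunique _ (hne_one hy hxy)).symm)
  have := hyd.mul_left (hAC hxZ (commute_inv_mul_of_commutatorElement_eq hm).symm hxd)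
  rw [mul_inv_cancel_left] at this
  exact this.eq

theorem card_le_eight (hAC : IsACGroup G) [Finite G] (hZ : Nat.card (center G) = 2)
    {N : Subgroup G} (hN : ⁅N, N⁆ ≤ center G) (hNZ : N ⊓ centralizer N ≤ center G) {x y : G}
    (hx : x ∈ N) (hy : y ∈ N) (hxy : ¬ Commute y x) : Nat.card N ≤ 8 := by
  let f := (commutatorHom N x fun n hn ↦ hN (commutator_mem_commutator hn hx)).prod
    (commutatorHom N y fun n hn ↦ hN (commutator_mem_commutator hn hy))
  have hker : Nat.card f.ker ≤ 2 := by
    refine hZ ▸ Nat.card_le_card_of_injective (fun n ↦ ⟨n, hNZ ⟨(n : N).2, ?_⟩⟩) fun n m h ↦ ?_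
    · obtain ⟨hnx, hny⟩ := Prod.ext_iff.mp (MonoidHom.mem_ker.mp n.2)
      exact hAC.mem_centralizer_of_commute hZ hN hx hy hxy
        ((commutatorHom_eq_one_iff _ _).mp hnx).symm ((commutatorHom_eq_one_iff _ _).mp hny).symm
    · exact Subtype.ext (Subtype.ext (congrArg Subtype.val h :))
  calc Nat.card N = Nat.card f.ker * Nat.card f.range := by rw [← index_ker, card_mul_index]
    _ ≤ 2 * Nat.card (center G × center G) := Nat.mul_le_mul hker (card_le_card_group _)
    _ = 8 := by rw [Nat.card_prod, hZ]

theorem card_le_of_isSolvable (hAC : IsACGroup G) [Finite G] [Group.IsSolvable G]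
    (hG : center G ≠ ⊤) (hZ : Nat.card (center G) = 2) {c : ℕ}
    (hc : ∀ x ∉ center G, Nat.card (centralizer {x}) ≤ c) :
    Nat.card G ≤ c * c ∨ Nat.card G ≤ 8 * c := by
  by_cases hA : ∀ M : Subgroup G, M.Normal → (∀ a ∈ M, ∀ b ∈ M, Commute a b) → M ≤ center G
  · right
    obtain ⟨N, hNn, hNZ, hN⟩ := exists_normal_not_le_commutator_le hG
    obtain ⟨y, hy, x, hx, hxy⟩ : ∃ y ∈ N, ∃ x ∈ N, ¬ Commute y x := by
      by_contra! h
      exact hNZ (hA N hNn h)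
    have hcent : N ⊓ centralizer N ≤ center G :=
      hA _ inferInstance fun a ha b hb ↦ mem_centralizer_iff.mp hb.2 a ha.1
    calc Nat.card G ≤ Nat.card N * Nat.card (centralizer {x}) :=
          card_le_card_mul_card_centralizer hx
      _ ≤ 8 * c := Nat.mul_le_mul (hAC.card_le_eight hZ hN hcent hx hy hxy)
          (hc x fun h ↦ hxy (mem_center_iff.mp h y))
  · left
    push Not at hA
    obtain ⟨M, hMn, hMc, hMZ⟩ := hA
    obtain ⟨x, hxM, hxZ⟩ := SetLike.not_le_iff_exists.mp hMZ
    have hMx : M ≤ centralizer {x} := fun a ha ↦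
      mem_centralizer_singleton_iff.mpr (hMc x hxM a ha).eq.symm
    calc Nat.card G ≤ Nat.card M * Nat.card (centralizer {x}) :=
          card_le_card_mul_card_centralizer hxM
      _ ≤ c * c := Nat.mul_le_mul ((card_le_of_le hMx).trans (hc x hxZ)) (hc x hxZ)

end IsACGroup

theorem card_eq_card_center_add [Finite G] :
    Nat.card G = Nat.card (center G) + Nat.card {x : G // x ∉ center G} := by
  classical
  rw [← Nat.card_sum, Nat.card_congr (Equiv.sumCompl (· ∈ center G))]

theorem card_centralizer_eq_card_center_add [Finite G] (x : G) :
    Nat.card (centralizer {x}) =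
      Nat.card (center G) + Nat.card {w : {a : G // a ∉ center G} // Commute x w} := by
  classical
  let e : {g : centralizer {x} // (g : G) ∉ center G} ≃
      {w : {a : G // a ∉ center G} // Commute x w} :=
    { toFun g := ⟨⟨g, g.2⟩, (mem_centralizer_singleton_iff.mp g.1.2).symm⟩
      invFun w := ⟨⟨w, mem_centralizer_singleton_iff.mpr w.2.symm⟩, w.1.2⟩ }
  rw [← Nat.card_congr e, ← Nat.card_congr (Equiv.subtypeSubtypeEquivSubtype
      (q := (· ∈ center G)) fun h ↦ center_le_centralizer {x} h), ← Nat.card_sum,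
    Nat.card_congr (Equiv.sumCompl fun g : centralizer {x} ↦ (g : G) ∈ center G)]

end GroupTheory

section NoncommutingGraph

variable {G H : Type*} [Group G] [Group H]

theorem commute_iff_of_noncommutingGraph_iso (φ : noncommutingGraph G ≃g noncommutingGraph H)
    (v w : {x : G // x ∉ center G}) : Commute (φ v : H) (φ w) ↔ Commute (v : G) w :=
  not_iff_not.mp φ.map_adj_iff

theorem finite_of_noncommutingGraph_iso [Finite H]
    (φ : noncommutingGraph G ≃g noncommutingGraph H) (v : {x : G // x ∉ center G}) :
    Finite G := by
  classical
  have : Finite {x : G // x ∉ center G} := .of_equiv _ φ.toEquiv.symm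
  have : Finite (center G) := .of_injective (fun z : center G ↦ (⟨v * z, fun h ↦ v.2 <| by
    simpa using mul_mem h (inv_mem z.2)⟩ : {x : G // x ∉ center G})) fun z w h ↦
      Subtype.ext (mul_left_cancel (congrArg Subtype.val h))
  exact .of_equiv _ (Equiv.sumCompl (· ∈ center G))

theorem card_add_card_center_of_noncommutingGraph_iso [Finite G] [Finite H]
    (φ : noncommutingGraph G ≃g noncommutingGraph H) :
    Nat.card G + Nat.card (center H) = Nat.card H + Nat.card (center G) := by
  rw [card_eq_card_center_add, card_eq_card_center_add (G := H), Nat.card_congr φ.toEquiv]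
  ring

theorem card_centralizer_add_card_center_of_noncommutingGraph_iso [Finite G] [Finite H]
    (φ : noncommutingGraph G ≃g noncommutingGraph H) (v : {x : G // x ∉ center G}) :
    Nat.card (centralizer {(v : G)}) + Nat.card (center H) =
      Nat.card (centralizer {(φ v : H)}) + Nat.card (center G) := by
  rw [card_centralizer_eq_card_center_add, card_centralizer_eq_card_center_add,
    Nat.card_congr (φ.toEquiv.subtypeEquiv (q := fun w : {x : H // x ∉ center H} ↦
      Commute (φ v : H) w) fun w ↦ by exact (commute_iff_of_noncommutingGraph_iso φ v w).symm)]
  ring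

theorem IsACGroup.of_noncommutingGraph_iso (φ : noncommutingGraph G ≃g noncommutingGraph H)
    (hH : IsACGroup H) : IsACGroup G := by
  intro x y z hx hxy hxz
  by_cases hy : y ∈ center G
  · exact (mem_center_iff.mp hy z).symm
  by_cases hz : z ∈ center G
  · exact mem_center_iff.mp hz y
  rw [← commute_iff_of_noncommutingGraph_iso φ ⟨y, hy⟩ ⟨z, hz⟩]
  exact hH (φ ⟨x, hx⟩).2 ((commute_iff_of_noncommutingGraph_iso φ ⟨x, hx⟩ ⟨y, hy⟩).mpr hxy)
    ((commute_iff_of_noncommutingGraph_iso φ ⟨x, hx⟩ ⟨z, hz⟩).mpr hxz)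

end NoncommutingGraph

section Field

variable {F : Type*} [Field F]

theorem FiniteField.ringChar_ne_two_of_odd_card [Fintype F] (h : Odd (Fintype.card F)) :
    ringChar F ≠ 2 := fun h2 ↦
  Nat.not_even_iff_odd.mpr h (Nat.even_iff.mpr (FiniteField.even_card_iff_char_two.mp h2))

theorem ncard_setOf_quadratic_le (b c : F) : {x : F | x ^ 2 + b * x + c = 0}.ncard ≤ 2 := by
  by_contra! h
  obtain ⟨x, y, z, hx, hy, hz, hxy, hxz, hyz⟩ :=
    (Set.two_lt_ncard_iff (Set.finite_of_ncard_pos (by omega))).mp h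
  -- two distinct roots always sum to `-b`
  have hsum {u v : F} (hu : u ^ 2 + b * u + c = 0) (hv : v ^ 2 + b * v + c = 0) (huv : u ≠ v) :
      u + v = -b := by
    have : (u - v) * (u + v + b) = 0 := by linear_combination hu - hv
    linear_combination (mul_eq_zero.mp this).resolve_left (sub_ne_zero.mpr huv)
  exact hyz (by linear_combination hsum hx hy hxy - hsum hx hz hxz)

theorem exists_ne_zero_sq_ne_one [Fintype F] (hF : 4 ≤ Fintype.card F) :
    ∃ a : F, a ≠ 0 ∧ a ^ 2 ≠ 1 := by
  by_contra! h
  have hcover : (Set.univ : Set F) ⊆ {0} ∪ {x | x ^ 2 + 0 * x + -1 = 0} := fun a _ ↦ by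
    by_cases ha : a = 0
    · exact Or.inl ha
    · exact Or.inr (by simp [h a ha])
  have := (Set.ncard_le_ncard hcover).trans (Set.ncard_union_le _ _)
  rw [Set.ncard_univ, Set.ncard_singleton, Nat.card_eq_fintype_card] at this
  have := ncard_setOf_quadratic_le (0 : F) (-1)
  omega

/-- The pairs `(α, β)` with `det (α • 1 + β • x) = 1`, for any `x ∈ SL(2, F)` of trace `t`. -/
def traceConic (t : F) : Set (F × F) := {p | p.1 ^ 2 + t * p.1 * p.2 + p.2 ^ 2 = 1}

theorem mem_traceConic {t : F} {p : F × F} :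
    p ∈ traceConic t ↔ p.1 ^ 2 + t * p.1 * p.2 + p.2 ^ 2 = 1 := Iff.rfl

theorem card_traceConic_le [Fintype F] (t : F) :
    Nat.card (traceConic t) ≤ 2 * Fintype.card F := by
  have hfib (α : F) :
      {β | α ^ 2 + t * α * β + β ^ 2 = 1} = {β | β ^ 2 + t * α * β + (α ^ 2 - 1) = 0} := by
    ext β
    simp only [Set.mem_ofPred_eq]
    constructor <;> intro h <;> linear_combination h
  calc Nat.card (traceConic t) = ∑ α : F, Nat.card {β // α ^ 2 + t * α * β + β ^ 2 = 1} := by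
        rw [← Nat.card_sigma]
        exact Nat.card_congr
          (Equiv.subtypeProdEquivSigmaSubtype fun α β : F ↦ α ^ 2 + t * α * β + β ^ 2 = 1)
    _ ≤ ∑ _α : F, 2 := Finset.sum_le_sum fun α _ ↦ by
        rw [← Set.coe_ofPred, Nat.card_coe_set_eq, hfib]
        exact ncard_setOf_quadratic_le _ _
    _ = 2 * Fintype.card F := by simp [mul_comm]

theorem card_traceConic_two [Fintype F] (hF : ringChar F ≠ 2) :
    Nat.card (traceConic (2 : F)) = 2 * Fintype.card F := by
  let e : traceConic (2 : F) ≃ {r : F | r ^ 2 = 1} × F :=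
    { toFun p := (⟨p.1.1 + p.1.2, by
        rw [Set.mem_ofPred_eq]; linear_combination mem_traceConic.mp p.2⟩, p.1.2)
      invFun r := ⟨(r.1 - r.2, r.2), by
        rw [mem_traceConic]; linear_combination (id r.1.2 : (r.1 : F) ^ 2 = 1)⟩
      left_inv p := by ext <;> simp
      right_inv r := by ext <;> simp }
  have h : {r : F | r ^ 2 = 1} = {1, -1} := Set.ext fun r ↦ sq_eq_one_iff
  rw [Nat.card_congr e, Nat.card_prod, h, Nat.card_coe_set_eq,
    Set.ncard_pair (Ring.neg_one_ne_one_of_char_ne_two hF).symm, Nat.card_eq_fintype_card]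

theorem card_traceConic_add_inv [Fintype F] {a : F} (ha0 : a ≠ 0) (ha : a ^ 2 ≠ 1) :
    Nat.card (traceConic (a + a⁻¹)) = Fintype.card F - 1 := by
  have hc : a - a⁻¹ ≠ 0 := fun h ↦ ha (by field_simp at h; linear_combination h)
  have hfac {p : F × F} :
      p ∈ traceConic (a + a⁻¹) ↔ (p.1 + a * p.2) * (p.1 + a⁻¹ * p.2) = 1 := by
    rw [mem_traceConic]
    constructor <;> intro h
    · linear_combination h + p.2 ^ 2 * mul_inv_cancel₀ ha0
    · linear_combination h - p.2 ^ 2 * mul_inv_cancel₀ ha0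
  let e : traceConic (a + a⁻¹) ≃ Fˣ :=
    { toFun p := ⟨_, _, hfac.mp p.2, by rw [mul_comm, hfac.mp p.2]⟩
      invFun u := ⟨((u : F) - a * ((u - u⁻¹ : F) / (a - a⁻¹)), (u - u⁻¹ : F) / (a - a⁻¹)), by
        have hβ : (a - a⁻¹) * ((u - u⁻¹ : F) / (a - a⁻¹)) = u - u⁻¹ := mul_div_cancel₀ _ hc
        rw [hfac]
        linear_combination (-(u : F)) * hβ + u.mul_inv⟩
      left_inv p := by
        have hβ : (a * p.1.2 - a⁻¹ * p.1.2) / (a - a⁻¹) = p.1.2 := by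
          rw [div_eq_iff hc]; ring
        ext <;> simp [hβ]
      right_inv u := by ext; simp }
  rw [Nat.card_congr e, Nat.card_units, Nat.card_eq_fintype_card]

theorem Matrix.exists_eq_smul_one_add_smul_of_commute {A B : Matrix (Fin 2) (Fin 2) F}
    (hA : A ∉ Set.range (scalar (Fin 2))) (h : Commute A B) :
    ∃ α β : F, B = α • 1 + β • A := by
  have e (i j : Fin 2) := congrFun (congrFun h.eq i) j
  simp only [mul_apply, Fin.sum_univ_two] at e
  -- the commutation equations say that `(B 0 1, B 1 0, B 0 0 - B 1 1)` is parallel to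
  -- `(A 0 1, A 1 0, A 0 0 - A 1 1)`, which is nonzero as `A` is not scalar
  obtain ⟨β, h01, h10, hd⟩ : ∃ β, B 0 1 = β * A 0 1 ∧ B 1 0 = β * A 1 0 ∧
      B 0 0 - B 1 1 = β * (A 0 0 - A 1 1) := by
    by_cases hc : A 0 1 ≠ 0
    · refine ⟨B 0 1 / A 0 1, ?_, ?_, ?_⟩ <;> field_simp
      · linear_combination e 0 0
      · linear_combination -e 0 1
    by_cases hc' : A 1 0 ≠ 0
    · refine ⟨B 1 0 / A 1 0, ?_, ?_, ?_⟩ <;> field_simp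
      · linear_combination -e 0 0
      · linear_combination e 1 0
    have hd : A 0 0 - A 1 1 ≠ 0 := fun hd ↦ hA ⟨A 0 0, by
      ext i j; fin_cases i <;> fin_cases j <;> simp_all [sub_eq_zero]⟩
    refine ⟨(B 0 0 - B 1 1) / (A 0 0 - A 1 1), ?_, ?_, ?_⟩ <;> field_simp
    · linear_combination e 0 1
    · linear_combination -e 1 0
  refine ⟨B 0 0 - β * A 0 0, β, ?_⟩
  ext i j
  fin_cases i <;> fin_cases j <;>
    simp only [Fin.zero_eta, Fin.mk_one, Fin.isValue, add_apply, smul_apply, one_apply_eq,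
      one_apply_ne zero_ne_one, one_apply_ne one_ne_zero, smul_eq_mul, mul_one, mul_zero,
      zero_add, sub_add_cancel, h01, h10]
  linear_combination -hd

theorem Matrix.eq_of_smul_one_add_smul_eq {A : Matrix (Fin 2) (Fin 2) F}
    (hA : A ∉ Set.range (scalar (Fin 2))) {α β γ δ : F} (h : α • 1 + β • A = γ • 1 + δ • A) :
    α = γ ∧ β = δ := by
  have hβ : β = δ := by
    by_contra hne
    have h' : (β - δ) • A = (γ - α) • 1 := by linear_combination (norm := module) h
    refine hA ⟨(β - δ)⁻¹ * (γ - α), ?_⟩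
    rw [scalar_apply, ← smul_one_eq_diagonal, mul_smul, ← h',
      inv_smul_smul₀ (sub_ne_zero.mpr hne)]
  subst hβ
  exact ⟨by simpa using congrFun (congrFun h 0) 0, rfl⟩

namespace Matrix.SpecialLinearGroup

theorem mem_center_iff_mem_range_scalar {n R : Type*} [Fintype n] [DecidableEq n] [CommRing R]
    {A : SpecialLinearGroup n R} :
    A ∈ center (SpecialLinearGroup n R) ↔ (A : Matrix n n R) ∈ Set.range (scalar n) := by
  refine mem_center_iff.trans ⟨fun ⟨r, _, hr⟩ ↦ ⟨r, hr⟩, fun ⟨r, hr⟩ ↦ ⟨r, ?_, hr⟩⟩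
  have h := A.2
  rw [← hr] at h
  simpa using h

theorem coe_commute_iff {n R : Type*} [Fintype n] [DecidableEq n] [CommRing R]
    {A B : SpecialLinearGroup n R} : Commute (A : Matrix n n R) B ↔ Commute A B := by
  rw [Commute, SemiconjBy, ← coe_mul, ← coe_mul]
  exact Subtype.ext_iff.symm

theorem isACGroup : IsACGroup SL(2, F) := by
  intro x y z hx hxy hxz
  rw [mem_center_iff_mem_range_scalar] at hx
  rw [← coe_commute_iff] at hxy hxz ⊢
  obtain ⟨α, β, hy⟩ := exists_eq_smul_one_add_smul_of_commute hx hxy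
  obtain ⟨γ, δ, hz⟩ := exists_eq_smul_one_add_smul_of_commute hx hxz
  rw [hy, hz]
  simp only [commute_iff_eq, add_mul, mul_add, smul_mul_assoc, mul_smul_comm, one_mul, mul_one]
  module

theorem det_smul_one_add_smul (x : SL(2, F)) (α β : F) :
    det (α • 1 + β • (x : Matrix (Fin 2) (Fin 2) F)) =
      α ^ 2 + trace (x : Matrix (Fin 2) (Fin 2) F) * α * β + β ^ 2 := by
  have hx := x.2
  rw [det_fin_two] at hx
  simp only [det_fin_two, trace_fin_two, add_apply, smul_apply, one_apply_eq,
    one_apply_ne zero_ne_one, one_apply_ne one_ne_zero, smul_eq_mul, mul_one, mul_zero, zero_add]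
  linear_combination β ^ 2 * hx

def traceConicToCentralizer (x : SL(2, F))
    (p : traceConic (trace (x : Matrix (Fin 2) (Fin 2) F))) : centralizer {x} :=
  ⟨⟨p.1.1 • 1 + p.1.2 • x, (det_smul_one_add_smul x _ _).trans p.2⟩, by
    refine mem_centralizer_singleton_iff.mpr (coe_commute_iff.mp ?_).eq
    exact ((Commute.one_left _).smul_left _).add_left ((Commute.refl _).smul_left _)⟩

theorem card_centralizer_eq_card_traceConic {x : SL(2, F)} (hx : x ∉ center SL(2, F)) :
    Nat.card (centralizer {x}) =
      Nat.card (traceConic (trace (x : Matrix (Fin 2) (Fin 2) F))) := by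
  rw [mem_center_iff_mem_range_scalar] at hx
  refine (Nat.card_congr (Equiv.ofBijective (traceConicToCentralizer x)
    ⟨fun p p' h ↦ ?_, fun y ↦ ?_⟩)).symm
  · obtain ⟨h1, h2⟩ := eq_of_smul_one_add_smul_eq hx
      (congrArg (fun y : centralizer {x} ↦ ((y : SL(2, F)) : Matrix (Fin 2) (Fin 2) F)) h)
    exact Subtype.ext (Prod.ext h1 h2)
  · obtain ⟨α, β, hy⟩ := exists_eq_smul_one_add_smul_of_commute hx
      (coe_commute_iff.mpr (mem_centralizer_singleton_iff.mp y.2).symm)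
    refine ⟨⟨(α, β), ?_⟩, Subtype.ext (Subtype.ext hy.symm)⟩
    rw [mem_traceConic, ← det_smul_one_add_smul, ← hy]
    exact (y : SL(2, F)).2

theorem card_centralizer_le [Fintype F] {x : SL(2, F)} (hx : x ∉ center SL(2, F)) :
    Nat.card (centralizer {x}) ≤ 2 * Fintype.card F :=
  (card_centralizer_eq_card_traceConic hx).trans_le (card_traceConic_le _)

theorem exists_card_centralizer_eq_two_mul [Fintype F] (hF : ringChar F ≠ 2) :
    ∃ x : SL(2, F), x ∉ center SL(2, F) ∧ Nat.card (centralizer {x}) = 2 * Fintype.card F := by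
  let u : SL(2, F) := ⟨!![1, 1; 0, 1], by simp [det_fin_two_of]⟩
  have hu : u ∉ center SL(2, F) := by
    rw [mem_center_iff_mem_range_scalar]
    rintro ⟨r, hr⟩
    simpa [u] using congrFun (congrFun hr 0) 1
  refine ⟨u, hu, ?_⟩
  rw [card_centralizer_eq_card_traceConic hu, ← card_traceConic_two hF]
  simp [u, trace_fin_two, one_add_one_eq_two]

theorem exists_card_centralizer_eq_card_sub_one [Fintype F] (hF : 4 ≤ Fintype.card F) :
    ∃ x : SL(2, F), x ∉ center SL(2, F) ∧ Nat.card (centralizer {x}) = Fintype.card F - 1 := by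
  obtain ⟨a, ha0, ha⟩ := exists_ne_zero_sq_ne_one hF
  let d : SL(2, F) := ⟨!![a, 0; 0, a⁻¹], by simp [det_fin_two_of, ha0]⟩
  have hd : d ∉ center SL(2, F) := by
    rw [mem_center_iff_mem_range_scalar]
    rintro ⟨r, hr⟩
    have h0 := congrFun (congrFun hr 0) 0
    have h1 := congrFun (congrFun hr 1) 1
    simp only [d, scalar_apply, diagonal_apply_eq, of_apply, cons_val', cons_val_zero,
      cons_val_one, empty_val', cons_val_fin_one] at h0 h1
    subst h0
    exact ha (by rw [sq]; nth_rw 2 [h1]; exact mul_inv_cancel₀ ha0)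
  refine ⟨d, hd, ?_⟩
  rw [card_centralizer_eq_card_traceConic hd, ← card_traceConic_add_inv ha0 ha]
  simp [d, trace_fin_two]

theorem card_center_eq_two (hF : ringChar F ≠ 2) : Nat.card (center SL(2, F)) = 2 := by
  rw [Nat.card_congr (center_equiv_rootsOfUnity' 0).toEquiv, Fintype.card_fin]
  exact (IsPrimitiveRoot.neg_one (ringChar F) hF).card_rootsOfUnity

theorem card_SL_fin_two [Fintype F] :
    Nat.card SL(2, F) = Fintype.card F ^ 3 - Fintype.card F := by
  have hrange : (toGL : SL(2, F) →* GL (Fin 2) F).range = GeneralLinearGroup.det.ker :=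
    SetLike.coe_injective (by rw [MonoidHom.coe_range, range_toGL]; rfl)
  have hGL : Nat.card SL(2, F) * Nat.card Fˣ = Nat.card (GL (Fin 2) F) := by
    rw [Nat.card_congr (MonoidHom.ofInjective (f := (toGL : SL(2, F) →* GL (Fin 2) F))
      toGL_injective).toEquiv, hrange,
      ← (GeneralLinearGroup.det : GL (Fin 2) F →* Fˣ).ker.card_mul_index,
      index_ker, MonoidHom.range_eq_top.mpr GeneralLinearGroup.det_surjective, card_top]
  rw [Nat.card_units, card_GL_field, Nat.card_eq_fintype_card (α := F), Fin.prod_univ_two] at hGL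
  simp only [Fin.val_zero, pow_zero, Fin.val_one, pow_one] at hGL
  have hq : 1 < Fintype.card F := Fintype.one_lt_card
  refine Nat.eq_of_mul_eq_mul_right (Nat.sub_pos_of_lt hq) (hGL.trans ?_)
  have h2 : Fintype.card F ≤ Fintype.card F ^ 2 := Nat.le_self_pow two_ne_zero _
  have h3 : Fintype.card F ≤ Fintype.card F ^ 3 := Nat.le_self_pow three_ne_zero _
  zify [hq.le, h2, h3, Nat.one_le_pow 2 _ (by omega : 0 < Fintype.card F)]
  ring

end Matrix.SpecialLinearGroup

end Field

section SpecialLinearGroupGraph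

variable {F : Type*} [Field F] [Fintype F] {G : Type*} [Group G] [Finite G]

theorem card_center_eq_two_of_card_centralizer {q : ℕ} (hq5 : 5 ≤ q) (hqo : Odd q)
    (hG : Nat.card G + 2 = q ^ 3 - q + Nat.card (center G)) {x y : G}
    (hx : Nat.card (centralizer {x}) + 2 = q - 1 + Nat.card (center G))
    (hy : Nat.card (centralizer {y}) + 2 = 2 * q + Nat.card (center G)) :
    Nat.card (center G) = 2 := by
  have hza := card_dvd_of_le (center_le_centralizer {x})
  have hzb := card_dvd_of_le (center_le_centralizer {y})
  have han := Int.natCast_dvd_natCast.mpr (card_subgroup_dvd_card (centralizer {x}))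
  have hbn := Int.natCast_dvd_natCast.mpr (card_subgroup_dvd_card (centralizer {y}))
  have hz4 : Nat.card (center G) ∣ 4 := by
    refine (Nat.dvd_add_right (hza.mul_left 2)).mp ?_
    rw [show 2 * Nat.card (centralizer {x}) + 4 =
      Nat.card (center G) + Nat.card (centralizer {y}) by omega]
    exact dvd_add dvd_rfl hzb
  have hq3 : ((q ^ 3 - q : ℕ) : ℤ) = (q : ℤ) ^ 3 - q := by
    rw [Nat.cast_sub (Nat.le_self_pow (n := 3) (by norm_num) q), Nat.cast_pow]
  have hz1 : 1 ≤ Nat.card (center G) := Nat.card_pos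
  have hz : Nat.card (center G) ≤ 4 := Nat.le_of_dvd (by norm_num) hz4
  interval_cases hc : Nat.card (center G)
  · -- `|C(y)| = 2q - 1` divides `|G| = q³ - q - 1`, hence divides `11`
    have hb : (Nat.card (centralizer {y}) : ℤ) = 2 * q - 1 := by omega
    have hn : (Nat.card G : ℤ) = q ^ 3 - q - 1 := by omega
    have h11 : (2 * q - 1 : ℤ) ∣ 11 := by
      rw [hb, hn] at hbn
      rw [show (11 : ℤ) = (4 * q ^ 2 + 2 * q - 3) * (2 * q - 1) - 8 * (q ^ 3 - q - 1) by ring]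
      exact dvd_sub (dvd_mul_left _ _) (dvd_mul_of_dvd_right hbn 8)
    have := Int.le_of_dvd (by norm_num) h11
    obtain rfl : q = 5 := by obtain ⟨k, rfl⟩ := hqo; omega
    norm_num at h11
  · rfl
  · omega
  · -- `|C(x)| = q + 1` divides `|G| = q³ - q + 2`, hence divides `2`
    have ha : (Nat.card (centralizer {x}) : ℤ) = q + 1 := by omega
    have hn : (Nat.card G : ℤ) = q ^ 3 - q + 2 := by omega
    have h2 : (q + 1 : ℤ) ∣ 2 := by
      rw [ha, hn] at han
      rw [show (2 : ℤ) = q ^ 3 - q + 2 - (q ^ 2 - q) * (q + 1) by ring]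
      exact dvd_sub han (dvd_mul_left _ _)
    have := Int.le_of_dvd (by norm_num) h2
    omega

theorem card_center_eq_two_of_noncommutingGraph_iso (hq5 : 5 ≤ Fintype.card F)
    (hqo : Odd (Fintype.card F)) (φ : noncommutingGraph G ≃g noncommutingGraph SL(2, F)) :
    Nat.card (center G) = 2 := by
  have hF := FiniteField.ringChar_ne_two_of_odd_card hqo
  obtain ⟨u, hu, hCu⟩ := SpecialLinearGroup.exists_card_centralizer_eq_two_mul hF
  obtain ⟨d, hd, hCd⟩ := SpecialLinearGroup.exists_card_centralizer_eq_card_sub_one (F := F)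
    (by omega)
  have hcent (x : {x : SL(2, F) // x ∉ center SL(2, F)}) := by
    simpa [SpecialLinearGroup.card_center_eq_two hF] using
      card_centralizer_add_card_center_of_noncommutingGraph_iso φ (φ.symm x)
  have hcard := card_add_card_center_of_noncommutingGraph_iso φ
  rw [SpecialLinearGroup.card_center_eq_two hF, SpecialLinearGroup.card_SL_fin_two] at hcard
  exact card_center_eq_two_of_card_centralizer hq5 hqo hcard
    (by rw [hcent ⟨d, hd⟩, hCd]) (by rw [hcent ⟨u, hu⟩, hCu])

theorem card_centralizer_le_of_noncommutingGraph_iso (hF : ringChar F ≠ 2)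
    (φ : noncommutingGraph G ≃g noncommutingGraph SL(2, F)) (hZ : Nat.card (center G) = 2)
    (x : G) (hx : x ∉ center G) : Nat.card (centralizer {x}) ≤ 2 * Fintype.card F := by
  have h := card_centralizer_add_card_center_of_noncommutingGraph_iso φ ⟨x, hx⟩
  rw [SpecialLinearGroup.card_center_eq_two hF, hZ] at h
  exact (Nat.add_right_cancel h).trans_le (SpecialLinearGroup.card_centralizer_le (φ ⟨x, hx⟩).2)

end SpecialLinearGroupGraph

theorem not_solvable_of_noncommuting_graph_iso_sl_general
    (q : ℕ) (hq5 : 5 ≤ q) (hqo : Odd q)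
    (F : Type*) [Field F] [Fintype F] (hF : Fintype.card F = q)
    (G : Type*) [Group G]
    (φ : noncommutingGraph G ≃g
      noncommutingGraph (Matrix.SpecialLinearGroup (Fin 2) F)) :
    ¬ IsSolvable G := by
  intro hG
  have : Group.IsSolvable G := hG
  subst hF
  have hchar := FiniteField.ringChar_ne_two_of_odd_card hqo
  obtain ⟨u, hu, -⟩ := SpecialLinearGroup.exists_card_centralizer_eq_two_mul hchar
  have : Finite G := finite_of_noncommutingGraph_iso φ (φ.symm ⟨u, hu⟩)
  have hZ := card_center_eq_two_of_noncommutingGraph_iso hq5 hqo φ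
  have hcard := card_add_card_center_of_noncommutingGraph_iso φ
  rw [SpecialLinearGroup.card_center_eq_two hchar, SpecialLinearGroup.card_SL_fin_two, hZ] at hcard
  have h2 : 5 * Fintype.card F ≤ Fintype.card F ^ 2 :=
    (Nat.mul_le_mul_right _ hq5).trans_eq (sq _).symm
  have h3 : 5 * Fintype.card F ^ 2 ≤ Fintype.card F ^ 3 :=
    (Nat.mul_le_mul_right _ hq5).trans_eq (pow_succ' _ 2).symm
  rcases (IsACGroup.of_noncommutingGraph_iso φ SpecialLinearGroup.isACGroup).card_le_of_isSolvable
    (fun h ↦ (φ.symm ⟨u, hu⟩).2 ((eq_top_iff' _).mp h _)) hZ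
    (card_centralizer_le_of_noncommutingGraph_iso hchar φ hZ) with h | h
  · rw [show 2 * Fintype.card F * (2 * Fintype.card F) = 4 * Fintype.card F ^ 2 by ring] at h
    omega
  · omega

theorem not_solvable_of_noncommuting_graph_iso_sl
    (q : ℕ) (hq : IsPrimePow q) (hq5 : 5 ≤ q) (hqo : Odd q)
    (F : Type*) [Field F] [Fintype F] (hF : Fintype.card F = q)
    (G : Type*) [Group G]
    (φ : noncommutingGraph G ≃g
      noncommutingGraph (Matrix.SpecialLinearGroup (Fin 2) F)) :
    ¬ IsSolvable G :=
  not_solvable_of_noncommuting_graph_iso_sl_general q hq5 hqo F hF G φ
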